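/- Let D = (D_1, D_2) with D_1, D_2 : ℤ_{≥1} → (0,∞) (convention D_i(0) = 1). Let U = ((u_1,2),…,(u_k,2)) and V = ((v_1,1),…,(v_k,1)) with u_1 < … < u_k and v_1 < … < v_k be an endpoint pair. With the conventions v_0 = −∞ and u_{k+1} = +∞, set a_i = u_i ∨ (v_{i−1}+1) and b_i = (u_{i+1}−1) ∧ v_i for i ∈ {1,…,k}; call the interval ⟦a_i,b_i⟧ type 1 whenever a_i ≤ b_i, call an integer c with v_{i−1} < c < u_i for some i ∈ {1,…,k} type 0, and call all remaining integers in ⟦u_1, v_k⟧ type 2. Then D[U→V] = ∏_{⟦a,b⟧ type 1} D[(a,2)→(b,1)] · ∏_{c type 2} D[(c,2)→(c,1)]. -/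

import Mathlib

open scoped BigOperators

/-- Value of `f : ℤ_{≥ r} → ℝ`, with the convention that values below the domain base
`r` equal `1`. -/
noncomputable def clo (r : ℤ) (f : ℤ → ℝ) (y : ℤ) : ℝ := if y < r then 1 else f y

/-- A lattice step: one to the right, or down one level. -/
def IsStep (p q : ℤ × ℤ) : Prop :=
  (q.1 = p.1 + 1 ∧ q.2 = p.2) ∨ (q.1 = p.1 ∧ q.2 = p.2 - 1)

/-- A non-intersecting multipath from `U` to `V`; points `(x, m)` must satisfy the
domain condition `x ≥ rl m`, and the paths are pairwise disjoint as sets of points. -/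
structure Multipath (rl : ℤ → ℤ) {k : ℕ} (U V : Fin k → ℤ × ℤ) where
  pts : Fin k → List (ℤ × ℤ)
  ne : ∀ i, pts i ≠ []
  chain : ∀ i, (pts i).Chain' IsStep
  head : ∀ i, (pts i).head? = some (U i)
  last : ∀ i, (pts i).getLast? = some (V i)
  dom : ∀ i, ∀ p ∈ pts i, rl p.2 ≤ p.1
  disj : ∀ i j, i ≠ j → ∀ p ∈ pts i, p ∉ pts j

/-- The weight of a single path: the product of `D_m(x)/D_m(x−1)` over its points,
with the convention `D_m(r_m − 1) = 1`. -/
noncomputable def pathWeight (rl : ℤ → ℤ) (D : ℤ → ℤ → ℝ) (l : List (ℤ × ℤ)) : ℝ :=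
  (l.map (fun p => D p.2 p.1 / clo (rl p.2) (D p.2) (p.1 - 1))).prod

/-- The partition function `D[U → V]`: the sum over non-intersecting multipaths from
`U` to `V` of the product of the weights of the paths (a finite sum, written as a
`tsum` over the type of multipaths; it is `0` if no multipath exists). -/
noncomputable def partFn (rl : ℤ → ℤ) (D : ℤ → ℤ → ℝ) {k : ℕ} (U V : Fin k → ℤ × ℤ) : ℝ :=
  ∑' π : Multipath rl U V, ∏ i, pathWeight rl D (π.pts i)

open scoped Classical

/-!
A path from `(x, 2)` to `(y, 1)` runs along level 2 up to the column `t` where it steps down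
and then along level 1, so it is determined by `t ∈ ⟦x, y⟧` and its weight telescopes to
`D₂(t)/D₂(x-1) · D₁(y)/D₁(t-1)`. Two consecutive paths avoid each other iff
`t_i < u_{i+1}` and `v_i < t_{i+1}`, so the turning points range independently over the
intervals `⟦a_i, b_i⟧`, which are non-empty because `(U, V)` is an endpoint pair, and
`D[U → V]` factorizes into sums over these intervals. Each sum is `D[(a_i,2) → (b_i,1)]` up to
the factor `D₂(a_i-1)/D₂(u_i-1) · D₁(v_i)/D₁(b_i)`. Pairing the `D₂` part of index `i` with
the `D₁` part of index `i-1`, these factors telescope to the product of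
`D[(c,2) → (c,1)] = D₂(c)D₁(c)/(D₂(c-1)D₁(c-1))` over the overlap `⟦u_i, v_{i-1}⟧`, and these
overlaps are exactly the type 2 integers.
-/

open Finset

def levelSeg (m x y : ℤ) : List (ℤ × ℤ) :=
  (List.range (y + 1 - x).toNat).map fun n : ℕ => (x + n, m)

section LevelSeg

variable (m : ℤ) {x y : ℤ}

lemma levelSeg_of_lt (h : y < x) : levelSeg m x y = [] := by
  simp only [levelSeg, List.map_eq_nil_iff, List.range_eq_nil, Int.toNat_eq_zero]
  omega

lemma levelSeg_cons (h : x ≤ y) : levelSeg m x y = (x, m) :: levelSeg m (x + 1) y := by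
  rw [levelSeg, levelSeg, show (y + 1 - x).toNat = (y + 1 - (x + 1)).toNat + 1 by omega,
    List.range_succ_eq_map, List.map_cons, List.map_map]
  congr 1
  · simp
  · refine List.map_congr_left fun n _ => ?_
    simp only [Function.comp, Nat.cast_succ]
    ring_nf

lemma mem_levelSeg {p : ℤ × ℤ} : p ∈ levelSeg m x y ↔ p.2 = m ∧ x ≤ p.1 ∧ p.1 ≤ y := by
  simp only [levelSeg, List.mem_map, List.mem_range]
  constructor
  · rintro ⟨n, hn, rfl⟩
    omega
  · rintro ⟨rfl, hx, hy⟩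
    exact ⟨(p.1 - x).toNat, by omega, Prod.ext (by rw [Int.ofNat_toNat]; omega) rfl⟩

lemma head?_levelSeg (h : x ≤ y) : (levelSeg m x y).head? = some (x, m) := by
  rw [levelSeg_cons m h, List.head?_cons]

lemma getLast?_levelSeg (h : x ≤ y) : (levelSeg m x y).getLast? = some (y, m) := by
  simp only [levelSeg, List.getLast?_map, List.getLast?_range]
  rw [if_neg (by omega)]
  simp only [Option.map_some, Option.some.injEq, Prod.mk.injEq, and_true]
  omega

lemma isChain_levelSeg : (levelSeg m x y).IsChain IsStep := by
  rw [levelSeg, List.isChain_map, List.isChain_range]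
  intro n _
  left
  simp only [Nat.succ_eq_add_one, Nat.cast_add, Nat.cast_one, and_true]
  ring

lemma prod_map_levelSeg (f : ℤ × ℤ → ℝ) :
    ((levelSeg m x y).map f).prod = ∏ c ∈ Icc x y, f (c, m) := by
  rw [Int.Icc_eq_finset_map, prod_map, prod_eq_multiset_prod, range_val, Multiset.range,
    Multiset.map_coe, Multiset.prod_coe, levelSeg, List.map_map]
  rfl

end LevelSeg

def turnPath (x y t : ℤ) : List (ℤ × ℤ) := levelSeg 2 x t ++ levelSeg 1 t y

section TurnPath

variable {x y t : ℤ}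

lemma mem_turnPath {p : ℤ × ℤ} :
    p ∈ turnPath x y t ↔ (p.2 = 2 ∧ x ≤ p.1 ∧ p.1 ≤ t) ∨ (p.2 = 1 ∧ t ≤ p.1 ∧ p.1 ≤ y) := by
  simp only [turnPath, List.mem_append, mem_levelSeg]

lemma head?_turnPath (h : x ≤ t) : (turnPath x y t).head? = some (x, 2) := by
  rw [turnPath, levelSeg_cons 2 h, List.cons_append, List.head?_cons]

lemma getLast?_turnPath (h : t ≤ y) : (turnPath x y t).getLast? = some (y, 1) := by
  rw [turnPath, List.getLast?_append, getLast?_levelSeg 1 h]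
  rfl

lemma isChain_turnPath (hx : x ≤ t) (hy : t ≤ y) : (turnPath x y t).IsChain IsStep := by
  refine (isChain_levelSeg 2).append (isChain_levelSeg 1) fun p hp q hq => ?_
  rw [getLast?_levelSeg 2 hx, Option.mem_some_iff] at hp
  rw [head?_levelSeg 1 hy, Option.mem_some_iff] at hq
  subst hp hq
  exact Or.inr ⟨rfl, by norm_num⟩

lemma eq_of_turnPath_eq {t' : ℤ} (h : x ≤ t) (h' : x ≤ t')
    (e : turnPath x y t = turnPath x y t') : t = t' := by
  have h₁ : (t, (2 : ℤ)) ∈ turnPath x y t' := e ▸ mem_turnPath.2 (Or.inl ⟨rfl, h, le_rfl⟩)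
  have h₂ : (t', (2 : ℤ)) ∈ turnPath x y t := e ▸ mem_turnPath.2 (Or.inl ⟨rfl, h', le_rfl⟩)
  rw [mem_turnPath] at h₁ h₂
  omega

end TurnPath

lemma level_le_of_isChain {p q : ℤ × ℤ} {l : List (ℤ × ℤ)} (hl : (p :: l).IsChain IsStep)
    (hq : (p :: l).getLast? = some q) : q.2 ≤ p.2 := by
  induction l generalizing p with
  | nil => simp_all
  | cons r l ih =>
    rw [List.isChain_cons_cons] at hl
    have := ih hl.2 (by simpa using hq)
    rcases hl.1 with ⟨-, h⟩ | ⟨-, h⟩ <;> omega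

lemma eq_levelSeg_of_isChain {l : List (ℤ × ℤ)} {x y : ℤ} (hl : l.IsChain IsStep)
    (hx : l.head? = some (x, 1)) (hy : l.getLast? = some (y, 1)) :
    x ≤ y ∧ l = levelSeg 1 x y := by
  induction l generalizing x with
  | nil => simp at hx
  | cons p l ih =>
    obtain rfl : p = (x, 1) := by simpa using hx
    cases l with
    | nil =>
      obtain rfl : x = y := by simpa using hy
      exact ⟨le_rfl, by rw [levelSeg_cons 1 le_rfl, levelSeg_of_lt 1 (by omega)]⟩
    | cons r l =>
      rw [List.isChain_cons_cons] at hl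
      have hy' : (r :: l).getLast? = some (y, 1) := by simpa using hy
      rcases hl.1 with ⟨h₁, h₂⟩ | ⟨-, h₂⟩
      · obtain ⟨hxy, he⟩ := ih (x := x + 1) hl.2 (by simp [Prod.ext_iff, h₁, h₂]) hy'
        exact ⟨by omega, he ▸ (levelSeg_cons 1 (by omega)).symm⟩
      · have := level_le_of_isChain hl.2 hy'
        simp only at this
        omega

lemma exists_eq_turnPath_of_isChain {l : List (ℤ × ℤ)} {x y : ℤ} (hl : l.IsChain IsStep)
    (hx : l.head? = some (x, 2)) (hy : l.getLast? = some (y, 1)) :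
    ∃ t, x ≤ t ∧ t ≤ y ∧ l = turnPath x y t := by
  induction l generalizing x with
  | nil => simp at hx
  | cons p l ih =>
    obtain rfl : p = (x, 2) := by simpa using hx
    cases l with
    | nil => simp at hy
    | cons r l =>
      rw [List.isChain_cons_cons] at hl
      have hy' : (r :: l).getLast? = some (y, 1) := by simpa using hy
      rcases hl.1 with ⟨h₁, h₂⟩ | ⟨h₁, h₂⟩
      · obtain ⟨t, hxt, hty, he⟩ :=
          ih (x := x + 1) hl.2 (by simp [Prod.ext_iff, h₁, h₂]) hy'
        refine ⟨t, by omega, hty, ?_⟩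
        rw [he, turnPath, turnPath, levelSeg_cons 2 (x := x) (by omega), List.cons_append]
      · obtain ⟨hxy, he⟩ :=
          eq_levelSeg_of_isChain (x := x) hl.2 (by simp [Prod.ext_iff, h₁, h₂]) hy'
        refine ⟨x, le_rfl, hxy, ?_⟩
        rw [he, turnPath, levelSeg_cons 2 le_rfl, levelSeg_of_lt 2 (by omega)]
        rfl

lemma clo_of_le {r z : ℤ} (f : ℤ → ℝ) (h : r ≤ z) : clo r f z = f z :=
  if_neg (not_lt.2 h)

lemma clo_pos {r : ℤ} {f : ℤ → ℝ} (hf : ∀ z, r ≤ z → 0 < f z) (z : ℤ) : 0 < clo r f z := by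
  unfold clo
  split_ifs with h
  exacts [one_pos, hf z (not_lt.1 h)]

lemma prod_Icc_div_sub_one {K : Type*} [CommGroupWithZero K] {g : ℤ → K} (hg : ∀ z, g z ≠ 0)
    {p q : ℤ} (h : p - 1 ≤ q) : ∏ c ∈ Icc p q, g c / g (c - 1) = g q / g (p - 1) := by
  induction q, h using Int.leInduction with
  | base => rw [Icc_eq_empty (by omega), prod_empty, div_self (hg _)]
  | succ q hq ih =>
    rw [← insert_Icc_right_eq_Icc_add_one (by omega), prod_insert (by simp), ih,
      add_sub_cancel_right, div_mul_div_cancel₀ (hg q)]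

lemma pathWeight_levelSeg {D : ℤ → ℤ → ℝ} {m x y : ℤ} (hD : ∀ z, 1 ≤ z → 0 < D m z)
    (hx : 1 ≤ x) (h : x - 1 ≤ y) :
    pathWeight (fun _ => 1) D (levelSeg m x y) = clo 1 (D m) y / clo 1 (D m) (x - 1) := by
  rw [pathWeight, prod_map_levelSeg]
  rw [prod_congr rfl fun c hc => by rw [← clo_of_le (D m) (hx.trans (mem_Icc.1 hc).1)]]
  exact prod_Icc_div_sub_one (fun z => (clo_pos hD z).ne') h

lemma pathWeight_append {rl : ℤ → ℤ} {D : ℤ → ℤ → ℝ} (l₁ l₂ : List (ℤ × ℤ)) :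
    pathWeight rl D (l₁ ++ l₂) = pathWeight rl D l₁ * pathWeight rl D l₂ := by
  simp only [pathWeight, List.map_append, List.prod_append]

/-- The weight of `turnPath x y t`, which telescopes along each of its two horizontal runs. -/
noncomputable def turnWeight (D : ℤ → ℤ → ℝ) (x y t : ℤ) : ℝ :=
  clo 1 (D 2) t / clo 1 (D 2) (x - 1) * (clo 1 (D 1) y / clo 1 (D 1) (t - 1))

lemma pathWeight_turnPath {D : ℤ → ℤ → ℝ}
    (hD : ∀ i : ℤ, i = 1 ∨ i = 2 → ∀ x : ℤ, 1 ≤ x → 0 < D i x)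
    {x y t : ℤ} (hx : 1 ≤ x) (hxt : x ≤ t) (hty : t ≤ y) :
    pathWeight (fun _ => 1) D (turnPath x y t) = turnWeight D x y t := by
  rw [turnPath, pathWeight_append, pathWeight_levelSeg (hD 2 (by simp)) hx (by omega),
    pathWeight_levelSeg (hD 1 (by simp)) (hx.trans hxt) (by omega), turnWeight]

/-- `t i` is the column where the `i`-th path of a non-intersecting family of paths
`(x i, 2) → (y i, 1)` steps down. -/
def IsAdmissibleTurns {k : ℕ} (x y t : Fin k → ℤ) : Prop :=
  (∀ i, x i ≤ t i ∧ t i ≤ y i) ∧ ∀ i j : Fin k, i.val + 1 = j.val → t i < x j ∧ y i < t j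

lemma Multipath.ext_pts {rl : ℤ → ℤ} {k : ℕ} {U V : Fin k → ℤ × ℤ} {π₁ π₂ : Multipath rl U V}
    (h : π₁.pts = π₂.pts) : π₁ = π₂ := by
  cases π₁
  cases π₂
  subst h
  rfl

section Turns

variable {k : ℕ} {x y t : Fin k → ℤ}

lemma IsAdmissibleTurns.lt_of_lt (hx : Monotone x) (hy : Monotone y)
    (ht : IsAdmissibleTurns x y t) {i j : Fin k} (hij : i < j) : t i < x j ∧ y i < t j := by
  have hi : i.val + 1 < k := by omega
  have hj : j.val - 1 < k := by omega
  have h₁ := (ht.2 i ⟨i.val + 1, hi⟩ rfl).1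
  have h₂ := (ht.2 ⟨j.val - 1, hj⟩ j (by simp; omega)).2
  have h₃ := hx (show (⟨i.val + 1, hi⟩ : Fin k) ≤ j from Fin.mk_le_of_le_val (by omega))
  have h₄ := hy (show i ≤ ⟨j.val - 1, hj⟩ from Fin.le_def.2 (by simp; omega))
  omega

def Multipath.ofTurns (hx : Monotone x) (hy : Monotone y) (hx1 : ∀ i, 1 ≤ x i)
    (ht : IsAdmissibleTurns x y t) :
    Multipath (fun _ => 1) (fun i => (x i, 2)) (fun i => (y i, 1)) where
  pts i := turnPath (x i) (y i) (t i)
  ne i h := by simpa [h] using head?_turnPath (y := y i) (ht.1 i).1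
  chain i := isChain_turnPath (ht.1 i).1 (ht.1 i).2
  head i := head?_turnPath (ht.1 i).1
  last i := getLast?_turnPath (ht.1 i).2
  dom i p hp := by
    have := hx1 i
    have := (ht.1 i).1
    rcases mem_turnPath.1 hp with ⟨-, h, -⟩ | ⟨-, h, -⟩ <;> omega
  disj i j hij p hpi hpj := by
    rcases lt_or_gt_of_ne hij with h | h <;> have := ht.lt_of_lt hx hy h <;>
      rcases mem_turnPath.1 hpi with ⟨_, _, _⟩ | ⟨_, _, _⟩ <;>
      rcases mem_turnPath.1 hpj with ⟨_, _, _⟩ | ⟨_, _, _⟩ <;> omega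

lemma Multipath.exists_turns (hx : Monotone x) (hy : Monotone y)
    (π : Multipath (fun _ => 1) (fun i => (x i, 2)) (fun i => (y i, 1))) :
    ∃ t, IsAdmissibleTurns x y t ∧ ∀ i, π.pts i = turnPath (x i) (y i) (t i) := by
  choose t hxt hty ht using
    fun i => exists_eq_turnPath_of_isChain (π.chain i) (π.head i) (π.last i)
  refine ⟨t, ⟨fun i => ⟨hxt i, hty i⟩, fun i j hij => ?_⟩, ht⟩
  have hlt : i < j := Fin.lt_def.2 (by omega)
  constructor
  · by_contra! h
    refine π.disj i j hlt.ne (x j, 2) ?_ ?_ <;> rw [ht] <;>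
      refine mem_turnPath.2 (Or.inl ⟨rfl, ?_, ?_⟩)
    exacts [hx hlt.le, h, le_rfl, hxt j]
  · by_contra! h
    refine π.disj i j hlt.ne (y i, 1) ?_ ?_ <;> rw [ht] <;>
      refine mem_turnPath.2 (Or.inr ⟨rfl, ?_, ?_⟩)
    exacts [hty i, le_rfl, h, hy hlt.le]

noncomputable def turnsEquivMultipath (hx : Monotone x) (hy : Monotone y) (hx1 : ∀ i, 1 ≤ x i)
    {A B : Fin k → ℤ} (hAB : ∀ t, IsAdmissibleTurns x y t ↔ ∀ i, t i ∈ Icc (A i) (B i)) :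
    Fintype.piFinset (fun i => Icc (A i) (B i)) ≃
      Multipath (fun _ => 1) (fun i => (x i, 2)) (fun i => (y i, 1)) :=
  Equiv.ofBijective
    (fun s => Multipath.ofTurns hx hy hx1 ((hAB s).2 (Fintype.mem_piFinset.1 s.2)))
    ⟨fun s s' h => Subtype.ext <| funext fun i => by
      have hs := (hAB s).2 (Fintype.mem_piFinset.1 s.2)
      have hs' := (hAB s').2 (Fintype.mem_piFinset.1 s'.2)
      exact eq_of_turnPath_eq (hs.1 i).1 (hs'.1 i).1 (congrFun (congrArg Multipath.pts h) i),
    fun π => by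
      obtain ⟨t, ht, hπ⟩ := π.exists_turns hx hy
      exact ⟨⟨t, Fintype.mem_piFinset.2 ((hAB t).1 ht)⟩, Multipath.ext_pts (funext hπ).symm⟩⟩

theorem partFn_eq_prod_sum_turnWeight {D : ℤ → ℤ → ℝ}
    (hD : ∀ i : ℤ, i = 1 ∨ i = 2 → ∀ x : ℤ, 1 ≤ x → 0 < D i x)
    (hx : Monotone x) (hy : Monotone y) (hx1 : ∀ i, 1 ≤ x i)
    {A B : Fin k → ℤ} (hAB : ∀ t, IsAdmissibleTurns x y t ↔ ∀ i, t i ∈ Icc (A i) (B i)) :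
    partFn (fun _ => 1) D (fun i => (x i, 2)) (fun i => (y i, 1))
      = ∏ i, ∑ t ∈ Icc (A i) (B i), turnWeight D (x i) (y i) t := by
  rw [partFn, ← (turnsEquivMultipath hx hy hx1 hAB).tsum_eq, tsum_fintype, prod_univ_sum,
    ← sum_coe_sort (Fintype.piFinset _)]
  refine sum_congr rfl fun s _ => prod_congr rfl fun i _ => ?_
  have hs := ((hAB s).2 (Fintype.mem_piFinset.1 s.2)).1 i
  exact pathWeight_turnPath hD (hx1 i) hs.1 hs.2

end Turns

lemma partFn_single {D : ℤ → ℤ → ℝ}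
    (hD : ∀ i : ℤ, i = 1 ∨ i = 2 → ∀ x : ℤ, 1 ≤ x → 0 < D i x) {p q : ℤ} (hp : 1 ≤ p) :
    partFn (fun _ => 1) D (fun _ : Fin 1 => (p, 2)) (fun _ => (q, 1))
      = ∑ t ∈ Icc p q, turnWeight D p q t := by
  have hAB (t : Fin 1 → ℤ) :
      IsAdmissibleTurns (fun _ => p) (fun _ => q) t ↔ ∀ i, t i ∈ Icc p q := by
    simp only [IsAdmissibleTurns, mem_Icc]
    exact ⟨And.left, fun h => ⟨h, fun i j hij => by omega⟩⟩
  rw [partFn_eq_prod_sum_turnWeight hD monotone_const monotone_const (fun _ => hp) hAB,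
    Fin.prod_univ_one]

section Bounds

variable {k : ℕ} {u v a b : ℕ → ℤ} {i : ℕ}

lemma typeOne_left_le_iff
    (ha : ∀ i, 1 ≤ i → i ≤ k → a i = if i = 1 then u 1 else max (u i) (v (i - 1) + 1))
    (hi : 1 ≤ i) (hik : i ≤ k) {c : ℤ} : a i ≤ c ↔ u i ≤ c ∧ (2 ≤ i → v (i - 1) < c) := by
  rw [ha i hi hik]
  split_ifs with h
  · subst h
    omega
  · rw [max_le_iff]
    omega

lemma le_typeOne_right_iff
    (hb : ∀ i, 1 ≤ i → i ≤ k → b i = if i = k then v k else min (u (i + 1) - 1) (v i))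
    (hi : 1 ≤ i) (hik : i ≤ k) {c : ℤ} : c ≤ b i ↔ c ≤ v i ∧ (i < k → c < u (i + 1)) := by
  rw [hb i hi hik]
  split_ifs with h
  · subst h
    omega
  · rw [le_min_iff]
    omega

lemma MonotoneOn.monotone_fin_succ (hu : MonotoneOn u (Set.Icc 1 k)) :
    Monotone fun i : Fin k => u (i.val + 1) :=
  fun i j hij => hu ⟨by omega, by omega⟩ ⟨by omega, by omega⟩ (by simpa using hij)

lemma isAdmissibleTurns_iff
    (ha : ∀ i, 1 ≤ i → i ≤ k → a i = if i = 1 then u 1 else max (u i) (v (i - 1) + 1))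
    (hb : ∀ i, 1 ≤ i → i ≤ k → b i = if i = k then v k else min (u (i + 1) - 1) (v i))
    (t : Fin k → ℤ) :
    IsAdmissibleTurns (fun i : Fin k => u (i.val + 1)) (fun i => v (i.val + 1)) t ↔
      ∀ i : Fin k, t i ∈ Icc (a (i.val + 1)) (b (i.val + 1)) := by
  simp only [IsAdmissibleTurns, mem_Icc]
  constructor
  · rintro ⟨hxy, hadj⟩ i
    rw [typeOne_left_le_iff ha (i := i.val + 1) (by omega) (by omega),
      le_typeOne_right_iff hb (i := i.val + 1) (by omega) (by omega)]
    refine ⟨⟨(hxy i).1, fun h => ?_⟩, (hxy i).2, fun h => (hadj i ⟨i.val + 1, h⟩ rfl).1⟩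
    have := (hadj ⟨i.val - 1, by omega⟩ i (by simp; omega)).2
    rwa [Nat.sub_add_cancel (by omega : 1 ≤ i.val)] at this
  · intro h
    refine ⟨fun i => ?_, fun i j hij => ?_⟩
    · have hi := h i
      rw [typeOne_left_le_iff ha (i := i.val + 1) (by omega) (by omega),
        le_typeOne_right_iff hb (i := i.val + 1) (by omega) (by omega)] at hi
      exact ⟨hi.1.1, hi.2.1⟩
    · have hi := (le_typeOne_right_iff hb (by omega) (by omega)).1 (h i).2
      have hj := (typeOne_left_le_iff ha (by omega) (by omega)).1 (h j).1
      rw [← hij, Nat.add_sub_cancel] at hj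
      rw [← hij]
      exact ⟨hi.2 (by omega), hj.2 (by omega)⟩

lemma le_of_multipath (hu : MonotoneOn u (Set.Icc 1 k)) (hv : MonotoneOn v (Set.Icc 1 k))
    (ha : ∀ i, 1 ≤ i → i ≤ k → a i = if i = 1 then u 1 else max (u i) (v (i - 1) + 1))
    (hb : ∀ i, 1 ≤ i → i ≤ k → b i = if i = k then v k else min (u (i + 1) - 1) (v i))
    (π : Multipath (fun _ => 1)
      (fun i : Fin k => (u (i.val + 1), 2)) (fun i => (v (i.val + 1), 1)))
    (hi : i ∈ Icc 1 k) : a i ≤ b i := by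
  obtain ⟨t, ht, -⟩ := π.exists_turns hu.monotone_fin_succ hv.monotone_fin_succ
  have := (isAdmissibleTurns_iff ha hb t).1 ht ⟨i - 1, by simp at hi; omega⟩
  rw [mem_Icc, Nat.sub_add_cancel (by simp at hi; omega)] at this
  exact this.1.trans this.2

end Bounds

section TypeTwo

variable {k : ℕ} {u v a b : ℕ → ℤ}

lemma filter_typeTwo_eq_biUnion (hk : 1 ≤ k) (hu : MonotoneOn u (Set.Icc 1 k))
    (hv : MonotoneOn v (Set.Icc 1 k))
    (ha : ∀ i, 1 ≤ i → i ≤ k → a i = if i = 1 then u 1 else max (u i) (v (i - 1) + 1))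
    (hb : ∀ i, 1 ≤ i → i ≤ k → b i = if i = k then v k else min (u (i + 1) - 1) (v i)) :
    (Icc (u 1) (v k)).filter (fun c =>
        ¬ (∃ i ∈ Icc 1 k, (2 ≤ i → v (i - 1) < c) ∧ c < u i) ∧
        ¬ (∃ i ∈ Icc 1 k, a i ≤ b i ∧ a i ≤ c ∧ c ≤ b i))
      = (Icc 2 k).biUnion fun i => Icc (u i) (v (i - 1)) := by
  have hu' {m n : ℕ} (h₁ : 1 ≤ m) (h : m ≤ n) (h₂ : n ≤ k) : u m ≤ u n :=
    hu ⟨h₁, h.trans h₂⟩ ⟨h₁.trans h, h₂⟩ h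
  have hv' {m n : ℕ} (h₁ : 1 ≤ m) (h : m ≤ n) (h₂ : n ≤ k) : v m ≤ v n :=
    hv ⟨h₁, h.trans h₂⟩ ⟨h₁.trans h, h₂⟩ h
  ext c
  simp only [mem_filter, mem_biUnion, mem_Icc, not_exists, not_and]
  constructor
  · rintro ⟨⟨hc₁, hc₂⟩, hc₀, hc₁'⟩
    -- the last path starting at or before `c`
    set i := Nat.findGreatest (fun i => u i ≤ c) k
    have hi₁ : 1 ≤ i := Nat.le_findGreatest hk hc₁
    have hik : i ≤ k := Nat.findGreatest_le k
    have hui : u i ≤ c := Nat.findGreatest_spec (P := fun i => u i ≤ c) hk hc₁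
    have hlt (j : ℕ) (hij : i < j) (hjk : j ≤ k) : c < u j :=
      lt_of_not_ge (Nat.findGreatest_is_greatest hij hjk)
    by_contra! hne
    have hai : a i ≤ c := (typeOne_left_le_iff ha hi₁ hik).2 ⟨hui, fun h => hne i ⟨h, hik⟩ hui⟩
    have hbi : b i < c := lt_of_not_ge fun h => hc₁' i ⟨hi₁, hik⟩ (hai.trans h) hai h
    rw [← not_le, le_typeOne_right_iff hb hi₁ hik, not_and_or, Classical.not_imp] at hbi
    rcases hbi with hvi | ⟨hik', hc⟩
    · have hik' : i < k := lt_of_le_of_ne hik fun h => hvi (h ▸ hc₂)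
      exact hc₀ (i + 1) ⟨by omega, hik'⟩ (fun _ => by simpa using hvi) (hlt _ (by omega) hik')
    · exact hc (hlt _ (by omega) hik')
  · rintro ⟨i, ⟨hi₂, hik⟩, hui, hvi⟩
    refine ⟨⟨(hu' le_rfl (by omega) hik).trans hui, hvi.trans (hv' (by omega) (by omega) le_rfl)⟩,
      fun j ⟨hj₁, hjk⟩ hvj huj => ?_, fun j ⟨hj₁, hjk⟩ _ haj hbj => ?_⟩
    · rcases le_or_gt j i with h | h
      · exact absurd ((hu' hj₁ h hik).trans hui) (not_le.2 huj)
      · exact absurd (hvi.trans (hv' (by omega) (by omega) (by omega))) (not_le.2 (hvj (by omega)))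
    · rw [typeOne_left_le_iff ha hj₁ hjk] at haj
      rw [le_typeOne_right_iff hb hj₁ hjk] at hbj
      rcases lt_or_ge j i with h | h
      · exact absurd ((hu' (by omega) h hik).trans hui) (not_le.2 (hbj.2 (by omega)))
      · exact absurd (hvi.trans (hv' (n := j - 1) (by omega) (by omega) (by omega)))
          (not_le.2 (haj.2 (by omega)))

lemma pairwiseDisjoint_Icc_overlap (hu : MonotoneOn u (Set.Icc 1 k))
    (ha : ∀ i, 1 ≤ i → i ≤ k → a i = if i = 1 then u 1 else max (u i) (v (i - 1) + 1))
    (hb : ∀ i, 1 ≤ i → i ≤ k → b i = if i = k then v k else min (u (i + 1) - 1) (v i))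
    (hab : ∀ i ∈ Icc 1 k, a i ≤ b i) :
    (Icc 2 k : Set ℕ).PairwiseDisjoint fun i => Icc (u i) (v (i - 1)) := by
  have key {p q : ℕ} (hp : 2 ≤ p) (hpq : p < q) (hq : q ≤ k) : v (p - 1) < u q := by
    have hab' := hab p (mem_Icc.2 ⟨by omega, by omega⟩)
    have hva := ((typeOne_left_le_iff ha (i := p) (by omega) (by omega)).1 le_rfl).2 hp
    have hbu := ((le_typeOne_right_iff hb (i := p) (by omega) (by omega)).1 le_rfl).2 (by omega)
    have := hu ⟨by omega, by omega⟩ ⟨by omega, hq⟩ (show p + 1 ≤ q by omega)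
    omega
  intro p hp q hq hpq
  simp only [coe_Icc, Set.mem_Icc] at hp hq
  rw [Function.onFun, disjoint_left]
  intro c hcp hcq
  rw [mem_Icc] at hcp hcq
  rcases lt_or_gt_of_ne hpq with h | h
  · have := key hp.1 h hq.2
    omega
  · have := key hq.1 h hp.2
    omega

end TypeTwo

lemma prod_fin_eq_prod_Icc {M : Type*} [CommMonoid M] (f : ℕ → M) (k : ℕ) :
    ∏ i : Fin k, f (i.val + 1) = ∏ i ∈ Icc 1 k, f i := by
  rw [Fin.prod_univ_eq_prod_range (fun i => f (i + 1)), range_eq_Ico, prod_Ico_add',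
    zero_add, Ico_add_one_right_eq_Icc]

lemma prod_Icc_mul_eq_prod_Icc_two {M : Type*} [CommMonoid M] {f g : ℕ → M} {k : ℕ} (hk : 1 ≤ k)
    (hf : f 1 = 1) (hg : g k = 1) :
    ∏ i ∈ Icc 1 k, f i * g i = ∏ i ∈ Icc 2 k, f i * g (i - 1) := by
  obtain ⟨n, rfl⟩ := Nat.exists_eq_add_of_le' hk
  have hf' : ∏ i ∈ Icc 1 (n + 1), f i = ∏ i ∈ Icc 2 (n + 1), f i := by
    rw [← insert_Icc_add_one_left_eq_Icc (by omega : 1 ≤ n + 1), prod_insert (by simp), hf,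
      one_mul]
    rfl
  have hg' : ∏ i ∈ Icc 1 (n + 1), g i = ∏ i ∈ Icc 2 (n + 1), g (i - 1) := by
    rw [prod_Icc_succ_top (by omega), hg, mul_one, ← map_add_right_Icc 1 n 1, prod_map]
    rfl
  rw [prod_mul_distrib, prod_mul_distrib, hf', hg']

lemma turnWeight_eq_mul_turnWeight {D : ℤ → ℤ → ℝ}
    (hD : ∀ i : ℤ, i = 1 ∨ i = 2 → ∀ x : ℤ, 1 ≤ x → 0 < D i x) (x y x' y' t : ℤ) :
    turnWeight D x y t = clo 1 (D 2) (x' - 1) / clo 1 (D 2) (x - 1)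
      * (clo 1 (D 1) y / clo 1 (D 1) y') * turnWeight D x' y' t := by
  have h₁ : clo 1 (D 1) y' ≠ 0 := (clo_pos (hD 1 (by simp)) y').ne'
  have h₂ : clo 1 (D 2) (x' - 1) ≠ 0 := (clo_pos (hD 2 (by simp)) (x' - 1)).ne'
  simp only [turnWeight]
  field_simp

lemma prod_Icc_turnWeight_self {D : ℤ → ℤ → ℝ}
    (hD : ∀ i : ℤ, i = 1 ∨ i = 2 → ∀ x : ℤ, 1 ≤ x → 0 < D i x) (p q : ℤ) :
    ∏ c ∈ Icc p q, turnWeight D c c c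
      = clo 1 (D 2) (max p (q + 1) - 1) / clo 1 (D 2) (p - 1)
        * (clo 1 (D 1) q / clo 1 (D 1) (min (p - 1) q)) := by
  have h₁ (z : ℤ) : clo 1 (D 1) z ≠ 0 := (clo_pos (hD 1 (by simp)) z).ne'
  have h₂ (z : ℤ) : clo 1 (D 2) z ≠ 0 := (clo_pos (hD 2 (by simp)) z).ne'
  rcases le_or_gt (p - 1) q with h | h
  · rw [max_eq_right (by omega), min_eq_left h, add_sub_cancel_right, div_mul_div_comm,
      ← prod_Icc_div_sub_one (fun z => mul_ne_zero (h₂ z) (h₁ z)) h]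
    refine prod_congr rfl fun c _ => ?_
    rw [turnWeight, div_mul_div_comm]
  · rw [Icc_eq_empty (by omega), prod_empty, max_eq_left (by omega), min_eq_right h.le,
      div_self (h₂ _), div_self (h₁ _), one_mul]

section Decomposition

variable {k : ℕ} {D : ℤ → ℤ → ℝ} {u v a b : ℕ → ℤ}

lemma partFn_eq_prod_Icc_sum (hD : ∀ i : ℤ, i = 1 ∨ i = 2 → ∀ x : ℤ, 1 ≤ x → 0 < D i x)
    (hu1 : 1 ≤ u 1) (hu : MonotoneOn u (Set.Icc 1 k)) (hv : MonotoneOn v (Set.Icc 1 k))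
    (ha : ∀ i, 1 ≤ i → i ≤ k → a i = if i = 1 then u 1 else max (u i) (v (i - 1) + 1))
    (hb : ∀ i, 1 ≤ i → i ≤ k → b i = if i = k then v k else min (u (i + 1) - 1) (v i)) :
    partFn (fun _ => 1) D
        (fun i : Fin k => (u (i.val + 1), 2)) (fun i => (v (i.val + 1), 1))
      = ∏ i ∈ Icc 1 k, ∑ t ∈ Icc (a i) (b i), turnWeight D (u i) (v i) t := by
  rw [partFn_eq_prod_sum_turnWeight hD hu.monotone_fin_succ hv.monotone_fin_succ
    (fun i => hu1.trans (hu ⟨le_rfl, by have := i.isLt; omega⟩ ⟨by omega, i.isLt⟩ (by omega)))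
    (isAdmissibleTurns_iff ha hb)]
  exact prod_fin_eq_prod_Icc (fun i => ∑ t ∈ Icc (a i) (b i), turnWeight D (u i) (v i) t) k

lemma prod_Icc_partFn_self (hD : ∀ i : ℤ, i = 1 ∨ i = 2 → ∀ x : ℤ, 1 ≤ x → 0 < D i x)
    (hu1 : 1 ≤ u 1) (hu : MonotoneOn u (Set.Icc 1 k))
    (ha : ∀ i, 1 ≤ i → i ≤ k → a i = if i = 1 then u 1 else max (u i) (v (i - 1) + 1))
    (hb : ∀ i, 1 ≤ i → i ≤ k → b i = if i = k then v k else min (u (i + 1) - 1) (v i))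
    {i : ℕ} (hi : i ∈ Icc 2 k) :
    ∏ c ∈ Icc (u i) (v (i - 1)), partFn (fun _ => 1) D (fun _ : Fin 1 => (c, 2)) (fun _ => (c, 1))
      = clo 1 (D 2) (a i - 1) / clo 1 (D 2) (u i - 1)
        * (clo 1 (D 1) (v (i - 1)) / clo 1 (D 1) (b (i - 1))) := by
  rw [mem_Icc] at hi
  have hui : 1 ≤ u i := hu1.trans (hu ⟨le_rfl, by omega⟩ ⟨by omega, hi.2⟩ (by omega))
  rw [prod_congr rfl fun c hc => by
      rw [partFn_single hD (hui.trans (mem_Icc.1 hc).1), Icc_self, sum_singleton],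
    prod_Icc_turnWeight_self hD, ha i (by omega) hi.2, if_neg (by omega),
    hb (i - 1) (by omega) (by omega), if_neg (by omega), Nat.sub_add_cancel (by omega)]

end Decomposition

theorem type_decomposition_general (k : ℕ) (hk : 1 ≤ k) (D : ℤ → ℤ → ℝ)
    (hD : ∀ i : ℤ, i = 1 ∨ i = 2 → ∀ x : ℤ, 1 ≤ x → 0 < D i x)
    (u v : ℕ → ℤ) (hu1 : 1 ≤ u 1)
    (hu : StrictMonoOn u (Set.Icc 1 k)) (hv : StrictMonoOn v (Set.Icc 1 k))
    (hpair : Nonempty (Multipath (fun _ => 1)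
      (fun i : Fin k => (u (i.val + 1), 2)) (fun i => (v (i.val + 1), 1))))
    (a b : ℕ → ℤ)
    (ha : ∀ i, 1 ≤ i → i ≤ k → a i = if i = 1 then u 1 else max (u i) (v (i - 1) + 1))
    (hb : ∀ i, 1 ≤ i → i ≤ k → b i = if i = k then v k else min (u (i + 1) - 1) (v i)) :
    partFn (fun _ => 1) D
        (fun i : Fin k => (u (i.val + 1), 2)) (fun i => (v (i.val + 1), 1))
      = (∏ i ∈ (Finset.Icc 1 k).filter (fun i => a i ≤ b i),
          partFn (fun _ => 1) D (fun _ : Fin 1 => (a i, 2)) (fun _ => (b i, 1)))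
        * ∏ c ∈ (Finset.Icc (u 1) (v k)).filter (fun c =>
            ¬ (∃ i ∈ Finset.Icc 1 k, (2 ≤ i → v (i - 1) < c) ∧ c < u i) ∧
            ¬ (∃ i ∈ Finset.Icc 1 k, a i ≤ b i ∧ a i ≤ c ∧ c ≤ b i)),
          partFn (fun _ => 1) D (fun _ : Fin 1 => (c, 2)) (fun _ => (c, 1)) := by
  have hum := hu.monotoneOn
  have hvm := hv.monotoneOn
  have hab (i : ℕ) (hi : i ∈ Icc 1 k) : a i ≤ b i := le_of_multipath hum hvm ha hb hpair.some hi
  have ha1 (i : ℕ) (hi : i ∈ Icc 1 k) : 1 ≤ a i := by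
    rw [mem_Icc] at hi
    exact hu1.trans ((hum ⟨le_rfl, hk⟩ hi hi.1).trans
      ((typeOne_left_le_iff ha hi.1 hi.2).1 le_rfl).1)
  rw [filter_true_of_mem hab, filter_typeTwo_eq_biUnion hk hum hvm ha hb,
    prod_biUnion (pairwiseDisjoint_Icc_overlap hum ha hb hab),
    partFn_eq_prod_Icc_sum hD hu1 hum hvm ha hb]
  set α : ℕ → ℝ := fun i => clo 1 (D 2) (a i - 1) / clo 1 (D 2) (u i - 1)
  set β : ℕ → ℝ := fun i => clo 1 (D 1) (v i) / clo 1 (D 1) (b i)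
  calc ∏ i ∈ Icc 1 k, ∑ t ∈ Icc (a i) (b i), turnWeight D (u i) (v i) t
      = ∏ i ∈ Icc 1 k, α i * β i
          * partFn (fun _ => 1) D (fun _ : Fin 1 => (a i, 2)) (fun _ => (b i, 1)) := by
        refine prod_congr rfl fun i hi => ?_
        rw [partFn_single hD (ha1 i hi), mul_sum]
        exact sum_congr rfl fun t _ => turnWeight_eq_mul_turnWeight hD _ _ _ _ t
    _ = _ := by
        rw [prod_mul_distrib, mul_comm, prod_Icc_mul_eq_prod_Icc_two hk (f := α) (g := β)
          (by simp [α, ha 1 le_rfl hk, div_self (clo_pos (hD 2 (by simp)) _).ne'])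
          (by simp [β, hb k hk le_rfl, div_self (clo_pos (hD 1 (by simp)) _).ne'])]
        exact congrArg₂ _ rfl
          (prod_congr rfl fun i hi => (prod_Icc_partFn_self hD hu1 hum ha hb hi).symm)

/-- **The decomposition (2.14) in Step 2 of the proof of Theorem 2.6:** the two-level
partition function factorizes over the type 1 intervals `⟦a_i, b_i⟧` and the type 2
integers of `⟦u_1, v_k⟧`. -/
theorem type_decomposition (k : ℕ) (hk : 1 ≤ k) (D : ℤ → ℤ → ℝ)
    (hD : ∀ i : ℤ, i = 1 ∨ i = 2 → ∀ x : ℤ, 1 ≤ x → 0 < D i x)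
    (u v : ℕ → ℤ) (hu1 : 1 ≤ u 1) (hv1 : 1 ≤ v 1)
    (hu : StrictMonoOn u (Set.Icc 1 k)) (hv : StrictMonoOn v (Set.Icc 1 k))
    (hpair : Nonempty (Multipath (fun _ => 1)
      (fun i : Fin k => (u (i.val + 1), 2)) (fun i => (v (i.val + 1), 1))))
    (a b : ℕ → ℤ)
    (ha : ∀ i, 1 ≤ i → i ≤ k → a i = if i = 1 then u 1 else max (u i) (v (i - 1) + 1))
    (hb : ∀ i, 1 ≤ i → i ≤ k → b i = if i = k then v k else min (u (i + 1) - 1) (v i)) :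
    partFn (fun _ => 1) D
        (fun i : Fin k => (u (i.val + 1), 2)) (fun i => (v (i.val + 1), 1))
      = (∏ i ∈ (Finset.Icc 1 k).filter (fun i => a i ≤ b i),
          partFn (fun _ => 1) D (fun _ : Fin 1 => (a i, 2)) (fun _ => (b i, 1)))
        * ∏ c ∈ (Finset.Icc (u 1) (v k)).filter (fun c =>
            ¬ (∃ i ∈ Finset.Icc 1 k, (2 ≤ i → v (i - 1) < c) ∧ c < u i) ∧
            ¬ (∃ i ∈ Finset.Icc 1 k, a i ≤ b i ∧ a i ≤ c ∧ c ≤ b i)),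
          partFn (fun _ => 1) D (fun _ : Fin 1 => (c, 2)) (fun _ => (c, 1)) :=
  type_decomposition_general k hk D hD u v hu1 hu hv hpair a b ha hb
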